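/- arXiv:2508.10499 — 2 statements merged into one kernel-verified Lean document; each statement's English description precedes it below -/
import Mathlib

section
/- Work in the exterior algebra Λ = ⋀(V) over 𝔽₂ = ℤ/2 on basis t₁, t₂, t₃, t₄, with τ the algebra automorphism induced by t₁ ↦ t₃, t₂ ↦ t₄, t₃ ↦ t₁, t₄ ↦ t₂. Then for every element x of the degree-2 homogeneous component ⋀²V that is fixed by τ, one has (t₁∧t₂ + t₃∧t₄) ∧ x ≠ t₁∧t₂∧t₃∧t₄. (Indeed the left-hand side is always 0 while t₁∧t₂∧t₃∧t₄ ≠ 0.) -/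
/-!
The functional `topForm` reading off the top-degree coefficient of `⋀(Rⁿ)` transforms under
`ExteriorAlgebra.map f` by `det f`. Since `τ` permutes the basis by an even permutation, the
top coefficient `φ` of `⋀(𝔽₂⁴)` is `τ`-invariant, and `τ (t₁t₂x) = t₃t₄x` for a `τ`-fixed `x`.
Hence `φ ((t₁t₂ + t₃t₄) x) = 2 φ (t₁t₂x) = 0`, whereas `φ (t₁t₂t₃t₄) = 1`.
-/

open ExteriorAlgebra

/-- The involution of `Fin 4` swapping `0 ↔ 2` and `1 ↔ 3`. -/
def swapPerm4 : Equiv.Perm (Fin 4) := (Equiv.swap 0 2).trans (Equiv.swap 1 3)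

/-- The linear involution of `𝔽₂⁴` with `t₁ ↦ t₃, t₂ ↦ t₄, t₃ ↦ t₁, t₄ ↦ t₂`
on the standard basis. -/
def swapLin4 : (Fin 4 → ZMod 2) →ₗ[ZMod 2] (Fin 4 → ZMod 2) :=
  LinearMap.funLeft (ZMod 2) (ZMod 2) swapPerm4

/-- The algebra automorphism `τ` of `⋀(𝔽₂⁴)` induced by the linear involution
`t₁ ↦ t₃, t₂ ↦ t₄, t₃ ↦ t₁, t₄ ↦ t₂`. -/
def tau4 : ExteriorAlgebra (ZMod 2) (Fin 4 → ZMod 2) →ₐ[ZMod 2]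
    ExteriorAlgebra (ZMod 2) (Fin 4 → ZMod 2) :=
  ExteriorAlgebra.map swapLin4

/-- The standard basis elements `t₁, t₂, t₃, t₄` of `𝔽₂⁴` inside the exterior algebra
(indexed here by `0, 1, 2, 3`). -/
noncomputable def t4 (i : Fin 4) : ExteriorAlgebra (ZMod 2) (Fin 4 → ZMod 2) :=
  ι (ZMod 2) (Pi.single i 1)

open Matrix

section TopForm

variable (R : Type*) [CommRing R] (n : ℕ)

noncomputable def topForm : ExteriorAlgebra R (Fin n → R) →ₗ[R] R :=
  liftAlternating fun i =>
    if h : i = n then detRowAlternating.domDomCongr (finCongr h.symm) else 0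

variable {R n}

theorem topForm_ιMulti_self (v : Fin n → Fin n → R) :
    topForm R n (ιMulti R n v) = (of v).det := by
  simp only [topForm, liftAlternating_apply_ιMulti, dite_true]
  rfl

theorem topForm_ιMulti_of_ne {i : ℕ} (hi : i ≠ n) (v : Fin i → Fin n → R) :
    topForm R n (ιMulti R i v) = 0 := by
  simp [topForm, liftAlternating_apply_ιMulti, hi]

theorem topForm_ιMulti_single : topForm R n (ιMulti R n fun i => Pi.single i 1) = 1 := by
  rw [topForm_ιMulti_self, show of (fun i => Pi.single i 1) = (1 : Matrix (Fin n) (Fin n) R) by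
    ext i j; simp [one_eq_pi_single], det_one]

theorem of_comp_eq_mul_transpose (f : (Fin n → R) →ₗ[R] (Fin n → R)) (v : Fin n → Fin n → R) :
    of (f ∘ v) = of v * (LinearMap.toMatrix' f)ᵀ := by
  ext i j
  rw [of_apply, Function.comp_apply, ← LinearMap.toMatrix'_mulVec, mul_apply]
  simp only [mulVec, dotProduct, of_apply, transpose_apply, mul_comm]

theorem topForm_map (f : (Fin n → R) →ₗ[R] (Fin n → R)) (y : ExteriorAlgebra R (Fin n → R)) :
    topForm R n (map f y) = LinearMap.det f * topForm R n y := by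
  suffices (topForm R n).comp (map f).toLinearMap = LinearMap.det f • topForm R n from
    LinearMap.congr_fun this y
  ext i v
  by_cases hi : i = n
  · subst hi
    simp [map_apply_ιMulti, topForm_ιMulti_self, of_comp_eq_mul_transpose, mul_comm]
  · simp [map_apply_ιMulti, topForm_ιMulti_of_ne hi]

theorem LinearMap.det_funLeft_perm {ι : Type*} [Fintype ι] [DecidableEq ι] (σ : Equiv.Perm ι) :
    LinearMap.det (LinearMap.funLeft R R σ) = Equiv.Perm.sign σ := by
  rw [← LinearMap.det_toMatrix', ← det_permutation σ]
  congr 1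
  ext i j
  simp [LinearMap.toMatrix'_apply, LinearMap.funLeft, Equiv.Perm.permMatrix, Pi.single_apply,
    PEquiv.toMatrix_apply]

end TopForm

theorem topForm_tau4 (y : ExteriorAlgebra (ZMod 2) (Fin 4 → ZMod 2)) :
    topForm (ZMod 2) 4 (tau4 y) = topForm (ZMod 2) 4 y := by
  have hsign : Equiv.Perm.sign swapPerm4 = 1 := by decide
  rw [tau4, topForm_map, swapLin4, LinearMap.det_funLeft_perm, hsign, Units.val_one,
    Int.cast_one, one_mul]

theorem tau4_t4 (i : Fin 4) : tau4 (t4 i) = t4 (swapPerm4 i) := by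
  have hsingle : swapLin4 (Pi.single i 1) = Pi.single (swapPerm4 i) 1 := by
    ext j
    fin_cases i <;> fin_cases j <;>
      simp [swapLin4, swapPerm4, LinearMap.funLeft, Equiv.swap_apply_def]
  rw [tau4, t4, map_apply_ι, hsingle, t4]

theorem t4_prod_eq_ιMulti :
    t4 0 * t4 1 * t4 2 * t4 3 = ιMulti (ZMod 2) 4 fun i => Pi.single i 1 := by
  simp only [ιMulti_apply, t4, List.ofFn_succ, List.prod_cons, List.ofFn_zero, List.prod_nil,
    mul_one, mul_assoc]
  rfl

/-- In `Λ = ⋀(𝔽₂⁴)` with `τ` induced by `t₁ ↦ t₃, t₂ ↦ t₄, t₃ ↦ t₁, t₄ ↦ t₂`: for every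
element `x` of the degree-2 component `⋀²(𝔽₂⁴)` fixed by `τ`, one has
`(t₁∧t₂ + t₃∧t₄) ∧ x ≠ t₁∧t₂∧t₃∧t₄`. -/
theorem stmt7 :
    ∀ x : ExteriorAlgebra (ZMod 2) (Fin 4 → ZMod 2),
      x ∈ ⋀[ZMod 2]^2 (Fin 4 → ZMod 2) → tau4 x = x →
        (t4 0 * t4 1 + t4 2 * t4 3) * x ≠ t4 0 * t4 1 * t4 2 * t4 3 := by
  intro x _ hfix heq
  have hτ : tau4 (t4 0 * t4 1 * x) = t4 2 * t4 3 * x := by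
    rw [map_mul, map_mul, tau4_t4, tau4_t4, hfix]
    rfl
  have hzero : topForm (ZMod 2) 4 ((t4 0 * t4 1 + t4 2 * t4 3) * x) = 0 := by
    rw [add_mul, map_add, ← hτ, topForm_tau4]
    exact CharTwo.add_self_eq_zero _
  rw [heq, t4_prod_eq_ιMulti, topForm_ιMulti_single] at hzero
  exact one_ne_zero hzero
end

section
/- Let C₂ be the cyclic group of order 2 acting on ℤ⁴ via the automorphism s sending (a₁, a₂, a₃, a₄) to (a₃, a₄, a₁, a₂), let π = ℤ⁴ ⋊ C₂ be the corresponding semidirect product, and let j : ℤ⁴ → π be the inclusion of the normal subgroup. Consider group cohomology with trivial coefficients 𝔽₂ = ℤ/2. Then the image of the restriction map j* : H²(π; 𝔽₂) → H²(ℤ⁴; 𝔽₂) is exactly the subgroup of classes x ∈ H²(ℤ⁴; 𝔽₂) fixed by the automorphism s* of H²(ℤ⁴; 𝔽₂) induced functorially by s. -/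
/-!
Conjugation by the lift `(1, τ) ∈ π` of the generator of `C₂` restricts to `s` on `ℤ⁴`, and inner
automorphisms act trivially on cohomology; hence `s* ∘ j* = j*`.

Conversely, let `c` be a 2-cocycle on `ℤ⁴` with `s*c - c = dψ`. Since `s` exchanges the summands
`ℤ² × 0` and `0 × ℤ²`, the primitive `ψ` can be replaced by an `s`-invariant one, and then, in
characteristic 2, `((u, a), (v, b)) ↦ c(u, a • v) + [a ≠ 1] ψ(v)` is a 2-cocycle on `π`
restricting to `c`.
-/

open groupCohomology

noncomputable section

universe u

section Functoriality

variable {k G H : Type u} [CommRing k] [Group G] [Group H]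

/-- The 2-coboundaries as a submodule of the 2-cocycles (the old Mathlib `twoCoboundaries`). -/
def twoCoboundaries (A : Rep k G) : Submodule k (cocycles₂ A) :=
  LinearMap.range ((d₁₂ A).hom.codRestrict (cocycles₂ A) fun c => d₁₂_apply_mem_cocycles₂ c)

/-- The old Mathlib `H2 A := twoCocycles A ⧸ twoCoboundaries A`. -/
abbrev H2Quot (A : Rep k G) := cocycles₂ A ⧸ twoCoboundaries A

/-- Pullback of inhomogeneous 2-cochains with trivial coefficients along a group
homomorphism `f : G →* H`, sending a cochain `c : H × H → k` to `c ∘ (f × f)`. -/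
def twoCochainsPullback (f : G →* H) : (H × H → k) →ₗ[k] (G × G → k) :=
  LinearMap.funLeft k k (Prod.map f f)

lemma twoCochainsPullback_mem_twoCocycles (f : G →* H) {c : H × H → k}
    (hc : c ∈ cocycles₂ (Rep.trivial k H k)) :
    twoCochainsPullback (k := k) f c ∈ cocycles₂ (Rep.trivial k G k) := by
  rw [mem_cocycles₂_iff] at hc ⊢
  intro g h j
  have := hc (f g) (f h) (f j)
  simpa only [twoCochainsPullback, LinearMap.funLeft_apply, Prod.map_apply, map_mul,
    Representation.isTrivial_apply] using this

/-- Pullback of 2-cocycles of the trivial representation along a group homomorphism. -/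
def twoCocyclesPullback (f : G →* H) :
    cocycles₂ (Rep.trivial k H k) →ₗ[k] cocycles₂ (Rep.trivial k G k) :=
  (twoCochainsPullback (k := k) f).restrict fun _ hc =>
    twoCochainsPullback_mem_twoCocycles f hc

lemma twoCocyclesPullback_coboundaries_le (f : G →* H) :
    twoCoboundaries (Rep.trivial k H k) ≤
      (twoCoboundaries (Rep.trivial k G k)).comap (twoCocyclesPullback (k := k) f) := by
  rintro ⟨c, hc⟩ ⟨φ, hφ⟩
  refine ⟨φ ∘ f, ?_⟩
  apply Subtype.ext
  have hφ' : (d₁₂ (Rep.trivial k H k)).hom φ = c := congrArg Subtype.val hφ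
  show (d₁₂ (Rep.trivial k G k)).hom (φ ∘ f) = twoCochainsPullback (k := k) f c
  funext g
  have := congrFun hφ' (Prod.map f f g)
  simp only [d₁₂_hom_apply, Representation.isTrivial_apply, Prod.map_fst, Prod.map_snd, Function.comp_apply,
    map_mul] at this ⊢
  simpa only [twoCochainsPullback, LinearMap.funLeft_apply, Function.comp_apply,
    Prod.map_fst, Prod.map_snd] using this

/-- The map `H²(H; k) → H²(G; k)` on degree-2 group cohomology with trivial coefficients
induced functorially by a group homomorphism `f : G →* H`. -/
def H2TrivPullback (f : G →* H) :
    H2Quot (Rep.trivial k H k) →ₗ[k] H2Quot (Rep.trivial k G k) :=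
  Submodule.mapQ _ _ (twoCocyclesPullback (k := k) f)
    (twoCocyclesPullback_coboundaries_le f)

end Functoriality

section Example

/-- The group `ℤ⁴`, written multiplicatively. -/
abbrev Z4 : Type := Multiplicative (Fin 4 → ℤ)

/-- The automorphism `s` of `ℤ⁴` sending `(a₁, a₂, a₃, a₄)` to `(a₃, a₄, a₁, a₂)`. -/
def sAut : MulAut Z4 where
  toFun v := Multiplicative.ofAdd (Multiplicative.toAdd v ∘ swapPerm4)
  invFun v := Multiplicative.ofAdd (Multiplicative.toAdd v ∘ swapPerm4)
  left_inv v := by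
    have hσ : ∀ i : Fin 4, swapPerm4 (swapPerm4 i) = i := by decide
    show Multiplicative.ofAdd ((Multiplicative.toAdd v ∘ swapPerm4) ∘ swapPerm4) = v
    have h : (Multiplicative.toAdd v ∘ swapPerm4) ∘ swapPerm4 = Multiplicative.toAdd v :=
      funext fun i => congrArg (Multiplicative.toAdd v) (hσ i)
    rw [h]
    rfl
  right_inv v := by
    have hσ : ∀ i : Fin 4, swapPerm4 (swapPerm4 i) = i := by decide
    show Multiplicative.ofAdd ((Multiplicative.toAdd v ∘ swapPerm4) ∘ swapPerm4) = v
    have h : (Multiplicative.toAdd v ∘ swapPerm4) ∘ swapPerm4 = Multiplicative.toAdd v :=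
      funext fun i => congrArg (Multiplicative.toAdd v) (hσ i)
    rw [h]
    rfl
  map_mul' _ _ := rfl

lemma sAut_sq : sAut * sAut = 1 := by
  ext v : 1
  show sAut (sAut v) = v
  exact sAut.left_inv v

/-- The cyclic group of order 2, written multiplicatively. -/
abbrev C₂ : Type := Multiplicative (ZMod 2)

/-- The action of `C₂` on `ℤ⁴` in which the nontrivial element acts by
`(a₁, a₂, a₃, a₄) ↦ (a₃, a₄, a₁, a₂)`. -/
def actC₂ : C₂ →* MulAut Z4 where
  toFun x := if x = 1 then 1 else sAut
  map_one' := if_pos rfl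
  map_mul' := by
    have hcases : ∀ z : C₂, z = 1 ∨ z = Multiplicative.ofAdd (1 : ZMod 2) := by decide
    have hmul : Multiplicative.ofAdd (1 : ZMod 2) * Multiplicative.ofAdd (1 : ZMod 2) = 1 := by
      decide
    have hne : Multiplicative.ofAdd (1 : ZMod 2) ≠ 1 := by decide
    intro x y
    rcases hcases x with hx | hx <;> rcases hcases y with hy | hy <;> subst hx <;> subst hy <;>
      simp [hne, hmul, sAut_sq]

/-- The semidirect product `π = ℤ⁴ ⋊ C₂`. -/
abbrev Pi4 : Type := Z4 ⋊[actC₂] C₂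

end Example

section TwoCohomology

variable {k G H K : Type u} [CommRing k] [Group G] [Group H] [Group K]

lemma H2TrivPullback_mk (f : G →* H) (c : cocycles₂ (Rep.trivial k H k)) :
    H2TrivPullback (k := k) f (Submodule.Quotient.mk c) =
      Submodule.Quotient.mk (twoCocyclesPullback f c) :=
  rfl

lemma mem_twoCoboundaries_iff {A : Rep k G} (c : cocycles₂ A) :
    c ∈ twoCoboundaries A ↔
      ∃ ψ : G → A, ∀ g h : G, A.ρ g (ψ h) - ψ (g * h) + ψ g = c (g, h) := by
  constructor
  · rintro ⟨ψ, hψ⟩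
    exact ⟨ψ, fun g h => congrFun (congrArg Subtype.val hψ) (g, h)⟩
  · rintro ⟨ψ, hψ⟩
    exact ⟨ψ, cocycles₂_ext hψ⟩

lemma H2TrivPullback_comp (f : G →* H) (f' : H →* K) :
    H2TrivPullback (k := k) (f'.comp f) = (H2TrivPullback f).comp (H2TrivPullback f') :=
  Submodule.linearMap_qext _ rfl

lemma twoCocyclesPullback_conj_sub_mem (t : G) (c : cocycles₂ (Rep.trivial k G k)) :
    twoCocyclesPullback (MulAut.conj t).toMonoidHom c - c ∈
      twoCoboundaries (Rep.trivial k G k) := by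
  have hc := (mem_cocycles₂_iff (c : G × G → k)).1 c.2
  simp only [Representation.isTrivial_apply] at hc
  refine (mem_twoCoboundaries_iff _).2 ⟨fun z => c (t * z * t⁻¹, t) - c (t, z), fun x y => ?_⟩
  have h₁ := hc t x y
  have h₂ := hc (t * x * t⁻¹) t y
  have h₃ := hc (t * x * t⁻¹) (t * y * t⁻¹) t
  rw [show t * x * t⁻¹ * t = t * x by group] at h₂
  rw [show t * x * t⁻¹ * (t * y * t⁻¹) = t * (x * y) * t⁻¹ by group,
    show t * y * t⁻¹ * t = t * y by group] at h₃
  change _ = c (t * x * t⁻¹, t * y * t⁻¹) - c (x, y)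
  simp only [Representation.isTrivial_apply]
  linear_combination h₂ - h₁ - h₃

lemma H2TrivPullback_conj (t : G) :
    H2TrivPullback (k := k) (MulAut.conj t).toMonoidHom = LinearMap.id :=
  Submodule.linearMap_qext _ <| LinearMap.ext fun c =>
    (Submodule.Quotient.eq _).2 (twoCocyclesPullback_conj_sub_mem t c)

end TwoCohomology

namespace SemidirectProduct

variable {k N G : Type u} [CommRing k] [Group N] [Group G] {φ : G →* MulAut N}

lemma inl_comp_aut (g : G) :
    (inl : N →* N ⋊[φ] G).comp (φ g).toMonoidHom = (MulAut.conj (inr g)).toMonoidHom.comp inl :=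
  MonoidHom.ext fun n => by simp [inl_aut]

lemma H2TrivPullback_aut_H2TrivPullback_inl (g : G) (x : H2Quot (Rep.trivial k (N ⋊[φ] G) k)) :
    H2TrivPullback (k := k) (φ g).toMonoidHom
        (H2TrivPullback (k := k) (inl : N →* N ⋊[φ] G) x) =
      H2TrivPullback (k := k) (inl : N →* N ⋊[φ] G) x := by
  rw [← LinearMap.comp_apply, ← H2TrivPullback_comp, inl_comp_aut, H2TrivPullback_comp,
    H2TrivPullback_conj, LinearMap.comp_id]

end SemidirectProduct

section CharTwo

open SemidirectProduct

variable {k N : Type u} [CommRing k] [CharP k 2] [Group N]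

lemma exists_invariant_primitive (σ : MulAut N) (hσ : ∀ u, σ (σ u) = u)
    (p : N →* N) (hp : ∀ u, p u * σ (p (σ u)) = u) (c : N × N → k) (ψ₀ : N → k)
    (hψ₀ : ∀ u v, ψ₀ v - ψ₀ (u * v) + ψ₀ u = c (σ u, σ v) - c (u, v)) :
    ∃ ψ : N → k, (∀ u v, ψ v - ψ (u * v) + ψ u = c (σ u, σ v) - c (u, v)) ∧
      ∀ u, ψ (σ u) = ψ u := by
  -- `ψ₀ ∘ p + ψ₀ ∘ σ ∘ p` has zero coboundary (as `σ² = 1`), so adding it keeps `dψ` unchanged.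
  refine ⟨fun u => ψ₀ u + ψ₀ (p u) + ψ₀ (σ (p u)), fun u v => ?_, fun u => ?_⟩
  · have hp₁ := hψ₀ (p u) (p v)
    have hp₂ := hψ₀ (σ (p u)) (σ (p v))
    rw [hσ, hσ] at hp₂
    simp only [map_mul]
    linear_combination hψ₀ u v + hp₁ + hp₂
  · have hσu : σ (p u) * p (σ u) = σ u := by
      simpa only [map_mul, hσ] using congrArg σ (hp u)
    have h₁ := hψ₀ (p u) (σ (p (σ u)))
    rw [hp, hσ] at h₁
    have h₂ := hψ₀ (σ (p u)) (p (σ u))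
    rw [hσu, hσ] at h₂
    linear_combination h₁ + h₂ +
      (ψ₀ (σ u) - ψ₀ (p u) - ψ₀ (σ (p u))) * CharTwo.two_eq_zero (R := k)

variable (φ : Multiplicative (ZMod 2) →* MulAut N)

omit [CharP k 2] in
lemma apply_ofAdd_one_apply_ofAdd_one (u : N) : φ (.ofAdd 1) (φ (.ofAdd 1) u) = u := by
  rw [← MulAut.mul_apply, ← map_mul,
    show (.ofAdd 1 * .ofAdd 1 : Multiplicative (ZMod 2)) = 1 by decide, map_one, MulAut.one_apply]

def twoCochainExtend (c : N × N → k) (ψ : N → k) :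
    (N ⋊[φ] Multiplicative (ZMod 2)) × (N ⋊[φ] Multiplicative (ZMod 2)) → k :=
  fun p => c (p.1.left, φ p.1.right p.2.left) + if p.1.right = 1 then 0 else ψ p.2.left

lemma twoCochainExtend_mem_cocycles₂ {c : N × N → k} (hc : c ∈ cocycles₂ (Rep.trivial k N k))
    {ψ : N → k} (hψ : ∀ u v, ψ v - ψ (u * v) + ψ u =
      c (φ (.ofAdd 1) u, φ (.ofAdd 1) v) - c (u, v))
    (hψσ : ∀ u, ψ (φ (.ofAdd 1) u) = ψ u) :
    twoCochainExtend φ c ψ ∈ cocycles₂ (Rep.trivial k (N ⋊[φ] Multiplicative (ZMod 2)) k) := by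
  have hc' := (mem_cocycles₂_iff (A := Rep.trivial k N k) c).1 hc
  simp only [Representation.isTrivial_apply] at hc'
  have hcases : ∀ a : Multiplicative (ZMod 2), a = 1 ∨ a = .ofAdd 1 := by decide
  have hττ : (.ofAdd 1 * .ofAdd 1 : Multiplicative (ZMod 2)) = 1 := by decide
  have hτ : (.ofAdd 1 : Multiplicative (ZMod 2)) ≠ 1 := by decide
  rw [mem_cocycles₂_iff]
  intro g h j
  simp only [twoCochainExtend, Representation.isTrivial_apply, mul_left, mul_right]
  rcases hcases g.right with hg | hg
  · simp only [hg, map_one, MulAut.one_apply, one_mul, if_true, add_zero]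
    linear_combination hc' g.left h.left (φ h.right j.left)
  rcases hcases h.right with hh | hh
  · simp only [hg, hh, map_one, MulAut.one_apply, mul_one, if_true, if_neg hτ, add_zero, map_mul]
    linear_combination hc' g.left (φ (.ofAdd 1) h.left) (φ (.ofAdd 1) j.left) +
      hψ h.left j.left + (c (φ (.ofAdd 1) h.left, φ (.ofAdd 1) j.left) - c (h.left, j.left)) *
        CharTwo.two_eq_zero (R := k)
  · simp only [hg, hh, hττ, map_one, MulAut.one_apply, if_true, if_neg hτ, add_zero,
      map_mul, apply_ofAdd_one_apply_ofAdd_one]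
    have h₂ := hψ h.left (φ (.ofAdd 1) j.left)
    rw [apply_ofAdd_one_apply_ofAdd_one] at h₂
    linear_combination hc' g.left (φ (.ofAdd 1) h.left) j.left + h₂ - hψσ j.left +
      (c (φ (.ofAdd 1) h.left, j.left) - c (h.left, φ (.ofAdd 1) j.left) - ψ j.left) *
        CharTwo.two_eq_zero (R := k)

theorem mem_range_H2TrivPullback_inl_of_fixed (p : N →* N)
    (hp : ∀ u, p u * φ (.ofAdd 1) (p (φ (.ofAdd 1) u)) = u) {x : H2Quot (Rep.trivial k N k)}
    (hx : H2TrivPullback (k := k) (φ (.ofAdd 1)).toMonoidHom x = x) :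
    x ∈ Set.range (H2TrivPullback (k := k) (inl : N →* N ⋊[φ] Multiplicative (ZMod 2))) := by
  obtain ⟨c, rfl⟩ := Submodule.Quotient.mk_surjective _ x
  rw [H2TrivPullback_mk, Submodule.Quotient.eq, mem_twoCoboundaries_iff] at hx
  obtain ⟨ψ₀, hψ₀⟩ := hx
  obtain ⟨ψ, hψ, hψσ⟩ := exists_invariant_primitive _ (apply_ofAdd_one_apply_ofAdd_one φ) p hp
    c ψ₀ hψ₀
  refine ⟨Submodule.Quotient.mk ⟨_, twoCochainExtend_mem_cocycles₂ φ c.2 hψ hψσ⟩, ?_⟩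
  rw [H2TrivPullback_mk]
  congr 1
  ext u v
  change twoCochainExtend φ c ψ (inl u, inl v) = c (u, v)
  simp [twoCochainExtend]

end CharTwo

section Example

lemma actC₂_ofAdd_one : actC₂ (.ofAdd 1) = sAut := by
  simp [actC₂]

def projZ4 : Z4 →* Z4 :=
  AddMonoidHom.toMultiplicative (AddMonoidHom.mulLeft ![1, 1, 0, 0])

lemma projZ4_mul_sAut_projZ4_sAut (u : Z4) : projZ4 u * sAut (projZ4 (sAut u)) = u := by
  have hσ : ∀ i, swapPerm4 (swapPerm4 i) = i := by decide
  have hm : ∀ i, (![1, 1, 0, 0] : Fin 4 → ℤ) i + ![1, 1, 0, 0] (swapPerm4 i) = 1 := by decide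
  apply Multiplicative.toAdd.injective
  funext i
  simp only [projZ4, AddMonoidHom.toMultiplicative_apply_apply, AddMonoidHom.coe_mulLeft, sAut,
    MulEquiv.coe_mk, Equiv.coe_fn_mk, toAdd_ofAdd, toAdd_mul, Pi.add_apply, Pi.mul_apply,
    Function.comp_apply, hσ]
  linear_combination Multiplicative.toAdd u i * hm i

/-- For `π = ℤ⁴ ⋊ C₂` (with the nontrivial element of `C₂` acting on `ℤ⁴` by
`s : (a₁,a₂,a₃,a₄) ↦ (a₃,a₄,a₁,a₂)`), and `j : ℤ⁴ → π` the inclusion of the normal subgroup,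
the image of the restriction map `j* : H²(π; 𝔽₂) → H²(ℤ⁴; 𝔽₂)` on group cohomology with
trivial coefficients `𝔽₂ = ℤ/2` is exactly the subgroup of classes fixed by the
automorphism `s*` of `H²(ℤ⁴; 𝔽₂)` induced functorially by `s`. -/
theorem stmt11 :
    Set.range (H2TrivPullback (k := ZMod 2) (SemidirectProduct.inl : Z4 →* Pi4)) =
      {x : H2Quot (Rep.trivial (ZMod 2) Z4 (ZMod 2)) |
        H2TrivPullback (k := ZMod 2) sAut.toMonoidHom x = x} := by
  ext x
  rw [Set.mem_ofPred_eq, ← actC₂_ofAdd_one]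
  constructor
  · rintro ⟨y, rfl⟩
    exact SemidirectProduct.H2TrivPullback_aut_H2TrivPullback_inl _ y
  · refine mem_range_H2TrivPullback_inl_of_fixed actC₂ projZ4 fun u => ?_
    rw [actC₂_ofAdd_one]
    exact projZ4_mul_sAut_projZ4_sAut u

end Example
end
end
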